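/- Under the stated hypotheses, the Hudson–Parthasarathy coefficient identity L₀₀ = −iH̃ − (1/2)L̃†L̃ holds; explicitly, −iE₀₀ − E₀₁(γ/2 + iE₁₁)^{−1}E₁₀ = −i(E₀₀ + Im{E₀₁(γ/2 + iE₁₁)^{−1}E₁₀}) − (γ/2)·E₀₁(γ/2 − iE₁₁)^{−1}(γ/2 + iE₁₁)^{−1}E₁₀. -/
import Mathlib


open ContinuousLinearMap

/-- The operator `γ/2 + iE₁₁`. -/
noncomputable def Aop {H : Type*} [NormedAddCommGroup H] [InnerProductSpace ℂ H]
    (γ : ℝ) (E11 : H →L[ℂ] H) : H →L[ℂ] H :=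
  ((γ / 2 : ℝ) : ℂ) • (1 : H →L[ℂ] H) + Complex.I • E11

/-- The operator `γ/2 − iE₁₁`. -/
noncomputable def Bop {H : Type*} [NormedAddCommGroup H] [InnerProductSpace ℂ H]
    (γ : ℝ) (E11 : H →L[ℂ] H) : H →L[ℂ] H :=
  ((γ / 2 : ℝ) : ℂ) • (1 : H →L[ℂ] H) - Complex.I • E11

/-- The operator imaginary part `Im X = (X − X†)/(2i)`. -/
noncomputable def ImOp {H : Type*} [NormedAddCommGroup H] [InnerProductSpace ℂ H]
    [CompleteSpace H] (X : H →L[ℂ] H) : H →L[ℂ] H :=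
  ((2 * Complex.I)⁻¹ : ℂ) • (X - adjoint X)

lemma isUnit_Aop_aux {H : Type*} [NormedAddCommGroup H] [InnerProductSpace ℂ H]
    [CompleteSpace H] (γ : ℝ) (hγ : 0 < γ) (E11 : H →L[ℂ] H)
    (hnorm : ‖E11‖ < γ / 2) : IsUnit (Aop γ E11) := by
  set c : ℂ := ((γ / 2 : ℝ) : ℂ) with hc_def
  have hc : c ≠ 0 := by
    simp only [hc_def, Ne, Complex.ofReal_eq_zero]
    linarith
  set t : (H →L[ℂ] H) := ((-Complex.I) / c) • E11 with ht_def
  have hct : c • t = (-Complex.I) • E11 := by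
    rw [ht_def, smul_smul, mul_div_cancel₀ _ hc]
  have hA : Aop γ E11 = c • ((1 : H →L[ℂ] H) - t) := by
    rw [smul_sub, hct, Aop, neg_smul, sub_neg_eq_add]
  have hnt : ‖t‖ < 1 := by
    have h1 : ‖t‖ = ‖E11‖ / (γ / 2) := by
      rw [ht_def, norm_smul, norm_div, norm_neg, Complex.norm_I, hc_def,
        Complex.norm_real, Real.norm_of_nonneg (by linarith)]
      ring
    rw [h1]
    exact (div_lt_one (by linarith)).mpr hnorm
  rw [hA, Algebra.smul_def]
  exact ((isUnit_iff_ne_zero.mpr hc).map (algebraMap ℂ (H →L[ℂ] H))).mul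
    (Units.oneSub t hnt).isUnit

lemma star_Aop {H : Type*} [NormedAddCommGroup H] [InnerProductSpace ℂ H]
    [CompleteSpace H] (γ : ℝ) (E11 : H →L[ℂ] H)
    (h11 : adjoint E11 = E11) : star (Aop γ E11) = Bop γ E11 := by
  rw [Aop, Bop, star_add, star_smul, star_smul, star_one, ← star_eq_adjoint] at *
  rw [h11]
  simp [Complex.conj_I, sub_eq_add_neg]

/-- Hudson–Parthasarathy coefficient identity `L₀₀ = −iH̃ − (1/2)L̃†L̃`:
`−iE₀₀ − E₀₁(γ/2 + iE₁₁)⁻¹E₁₀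
  = −i(E₀₀ + Im{E₀₁(γ/2 + iE₁₁)⁻¹E₁₀}) − (γ/2)·E₀₁(γ/2 − iE₁₁)⁻¹(γ/2 + iE₁₁)⁻¹E₁₀`. -/
theorem HP_coefficient_L00
    {H : Type*} [NormedAddCommGroup H] [InnerProductSpace ℂ H] [CompleteSpace H]
    (γ : ℝ) (hγ : 0 < γ) (E00 E01 E10 E11 : H →L[ℂ] H)
    (h00 : adjoint E00 = E00) (h11 : adjoint E11 = E11) (h01 : adjoint E01 = E10)
    (hnorm : ‖E11‖ < γ / 2) :
    (-Complex.I) • E00 - E01 * Ring.inverse (Aop γ E11) * E10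
      = (-Complex.I) • (E00 + ImOp (E01 * Ring.inverse (Aop γ E11) * E10))
        - ((γ / 2 : ℝ) : ℂ) •
            (E01 * Ring.inverse (Bop γ E11) * Ring.inverse (Aop γ E11) * E10) := by
  have hA : IsUnit (Aop γ E11) := isUnit_Aop_aux γ hγ E11 hnorm
  have hstar : star (Aop γ E11) = Bop γ E11 := star_Aop γ E11 h11
  have hB : IsUnit (Bop γ E11) := hstar ▸ hA.star
  set a := Ring.inverse (Aop γ E11) with ha_def
  set b := Ring.inverse (Bop γ E11) with hb_def
  -- adjoint of a is b
  have hadj_a : adjoint a = b := by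
    rw [← star_eq_adjoint, ha_def, ← Ring.inverse_star, hstar]
  -- adjoint of X
  have h10 : adjoint E10 = E01 := by rw [← h01, adjoint_adjoint]
  have hstar_a : star a = b := by
    rw [ha_def, ← Ring.inverse_star, hstar]
  have h01s : star E01 = E10 := by rw [star_eq_adjoint]; exact h01
  have h10s : star E10 = E01 := by rw [← h01s, star_star]
  have hadjX : adjoint (E01 * a * E10) = E01 * b * E10 := by
    rw [← star_eq_adjoint, star_mul, star_mul, h10s, hstar_a, h01s, ← mul_assoc]
  -- key: a + b = γ • (b * a)
  have hsum : Aop γ E11 + Bop γ E11 = ((γ : ℝ) : ℂ) • (1 : H →L[ℂ] H) := by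
    rw [Aop, Bop]
    rw [show ((γ:ℝ):ℂ) = ((γ/2:ℝ):ℂ) + ((γ/2:ℝ):ℂ) by push_cast; ring, add_smul]
    abel
  have hkey : a + b = ((γ : ℝ) : ℂ) • (b * a) := by
    have h1 : Aop γ E11 * a = 1 := Ring.mul_inverse_cancel _ hA
    have h2 : b * Bop γ E11 = 1 := Ring.inverse_mul_cancel _ hB
    calc a + b = b * (Aop γ E11 + Bop γ E11) * a := by
          rw [mul_add, add_mul, mul_assoc b _ a, h1, mul_one, h2, one_mul, add_comm]
      _ = ((γ : ℝ) : ℂ) • (b * a) := by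
          rw [hsum, mul_smul_comm, mul_one, smul_mul_assoc]
  have hZ : ((γ / 2 : ℝ) : ℂ) • (E01 * b * a * E10)
      = (2⁻¹ : ℂ) • (E01 * a * E10 + E01 * b * E10) := by
    have : E01 * a * E10 + E01 * b * E10 = ((γ : ℝ) : ℂ) • (E01 * b * a * E10) := by
      calc E01 * a * E10 + E01 * b * E10 = E01 * (a + b) * E10 := by
            rw [mul_add, add_mul]
        _ = ((γ : ℝ) : ℂ) • (E01 * b * a * E10) := by
            rw [hkey, mul_smul_comm, smul_mul_assoc, mul_assoc E01 b a]
    rw [this, smul_smul]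
    congr 1
    push_cast
    ring
  rw [ImOp, hadjX, hZ]
  have hI : ((2 * Complex.I)⁻¹ : ℂ) = Complex.I * (-(1/2)) := by
    rw [mul_inv, Complex.inv_I]
    ring
  rw [hI]
  set X := E01 * a * E10
  set Y := E01 * b * E10
  rw [smul_add, smul_smul, show -Complex.I * (Complex.I * (-(1/2))) = -(1/2 : ℂ) by
    rw [← mul_assoc, neg_mul, Complex.I_mul_I]; ring]
  module
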